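/- arXiv:0901.4060 — 7 statements merged into one kernel-verified Lean document; each statement's English description precedes it below -/
import Mathlib

section
/- Let f be a Hecke-multiplicative function and x ≥ 1 a real number. For any prime p with p² ≤ x, |f(p²)|² · Σ_{n ≤ x/p²} |f(n)|² ≤ 9 · Σ_{n ≤ x} |f(n)|². -/
/-!
Since `gcd (p², n) ∈ {1, p, p²}`, the Hecke relation reads
`f(p²) f(n) = f(p²n) + [p ∣ n] f(n) + [p² ∣ n] f(n/p²)`.
By `|a + b + c|² ≤ 3 (|a|² + |b|² + |c|²)`, summing over `n ≤ x/p²` bounds the left side by three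
times three sums, each at most `∑_{n ≤ x} |f n|²` because `n ↦ p²n` and `n ↦ n/p²` (on multiples
of `p²`) are injective into `[1, x]`.
-/

open Finset

def HeckeMult (f : ℕ → ℂ) : Prop :=
  f 1 = 1 ∧ ∀ m n : ℕ, 0 < m → 0 < n →
    f m * f n = ∑ d ∈ (Nat.gcd m n).divisors, f (m * n / d ^ 2)

theorem Nat.divisors_gcd_eq_filter {a : ℕ} (b : ℕ) (ha : a ≠ 0) :
    (Nat.gcd a b).divisors = {d ∈ a.divisors | d ∣ b} := by
  ext d
  simp [Nat.dvd_gcd_iff, ha]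

theorem norm_add_add_sq_le {E : Type*} [SeminormedAddCommGroup E] (a b c : E) :
    ‖a + b + c‖ ^ 2 ≤ 3 * (‖a‖ ^ 2 + ‖b‖ ^ 2 + ‖c‖ ^ 2) := by
  have htri : ‖a + b + c‖ ≤ ‖a‖ + ‖b‖ + ‖c‖ := norm_add₃_le
  nlinarith [norm_nonneg (a + b + c), sq_nonneg (‖a‖ - ‖b‖), sq_nonneg (‖a‖ - ‖c‖),
    sq_nonneg (‖b‖ - ‖c‖)]

theorem Finset.sum_comp_le_sum_of_injOn {ι κ M : Type*} [AddCommMonoid M] [PartialOrder M]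
    [IsOrderedAddMonoid M] {s : Finset ι} {t : Finset κ} {g : ι → κ} {w : κ → M}
    (hg : Set.InjOn g s) (hst : ∀ i ∈ s, g i ∈ t) (hw : ∀ k ∈ t, 0 ≤ w k) :
    ∑ i ∈ s, w (g i) ≤ ∑ k ∈ t, w k := by
  classical
  rw [← sum_image hg]
  exact sum_le_sum_of_subset_of_nonneg (image_subset_iff.2 hst) fun k hk _ => hw k hk

theorem Finset.sum_Icc_ite_dvd_div_le {M : Type*} [AddCommMonoid M] [PartialOrder M]
    [IsOrderedAddMonoid M] {q : ℕ} (hq : 0 < q) (N : ℕ) {w : ℕ → M} (hw : ∀ n, 0 ≤ w n) :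
    ∑ n ∈ Icc 1 N, (if q ∣ n then w (n / q) else 0) ≤ ∑ n ∈ Icc 1 N, w n := by
  rw [← sum_filter]
  refine sum_comp_le_sum_of_injOn ?_ ?_ fun n _ => hw n
  · intro a ha b hb hab
    exact (Nat.div_left_inj (mem_filter.1 ha).2 (mem_filter.1 hb).2).1 hab
  · intro n hn
    obtain ⟨hn, hqn⟩ := mem_filter.1 hn
    obtain ⟨h1n, hnN⟩ := mem_Icc.1 hn
    exact mem_Icc.2 ⟨Nat.div_pos (Nat.le_of_dvd h1n hqn) hq, (Nat.div_le_self n q).trans hnN⟩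

namespace HeckeMult

variable {f : ℕ → ℂ} {p : ℕ}

theorem mul_prime_sq (hf : HeckeMult f) (hp : p.Prime) {n : ℕ} (hn : 0 < n) :
    f (p ^ 2) * f n = f (p ^ 2 * n) + (if p ∣ n then f n else 0)
      + (if p ^ 2 ∣ n then f (n / p ^ 2) else 0) := by
  have hp2 : 0 < p ^ 2 := pow_pos hp.pos 2
  have hquot : p ^ 2 * n / (p ^ 2) ^ 2 = n / p ^ 2 := by
    rw [sq (p ^ 2), Nat.mul_div_mul_left _ _ hp2]
  rw [hf.2 _ _ hp2 hn, Nat.divisors_gcd_eq_filter n hp2.ne', sum_filter,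
    Nat.sum_divisors_prime_pow hp]
  simp only [sum_range_succ, sum_range_zero, zero_add, pow_zero, one_pow, Nat.div_one,
    one_dvd, if_true, pow_one, Nat.mul_div_cancel_left n hp2, hquot]

theorem norm_sq_mul_le (hf : HeckeMult f) (hp : p.Prime) {n : ℕ} (hn : 0 < n) :
    ‖f (p ^ 2)‖ ^ 2 * ‖f n‖ ^ 2 ≤
      3 * (‖f (p ^ 2 * n)‖ ^ 2 + ‖f n‖ ^ 2 + if p ^ 2 ∣ n then ‖f (n / p ^ 2)‖ ^ 2 else 0) := by
  rw [← mul_pow, ← norm_mul, hf.mul_prime_sq hp hn]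
  refine (norm_add_add_sq_le _ _ _).trans ?_
  gcongr
  · split_ifs <;> simp
  · split_ifs <;> simp

theorem norm_sq_mul_sum_le (hf : HeckeMult f) (hp : p.Prime) (M : ℕ) :
    ‖f (p ^ 2)‖ ^ 2 * ∑ n ∈ Icc 1 (M / p ^ 2), ‖f n‖ ^ 2 ≤ 9 * ∑ n ∈ Icc 1 M, ‖f n‖ ^ 2 := by
  have hp2 : 0 < p ^ 2 := pow_pos hp.pos 2
  set S := ∑ n ∈ Icc 1 M, ‖f n‖ ^ 2
  have hsub : Icc 1 (M / p ^ 2) ⊆ Icc (1 : ℕ) M := Icc_subset_Icc le_rfl (Nat.div_le_self M _)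
  have hscaled : ∑ n ∈ Icc 1 (M / p ^ 2), ‖f (p ^ 2 * n)‖ ^ 2 ≤ S := by
    refine sum_comp_le_sum_of_injOn (w := fun m => ‖f m‖ ^ 2)
      (fun a _ b _ h => Nat.eq_of_mul_eq_mul_left hp2 h) ?_ fun _ _ => sq_nonneg _
    intro n hn
    obtain ⟨h1n, hnM⟩ := mem_Icc.1 hn
    exact mem_Icc.2 ⟨Nat.mul_pos hp2 h1n, mul_comm (p ^ 2) n ▸ (Nat.le_div_iff_mul_le hp2).1 hnM⟩
  have hsame : ∑ n ∈ Icc 1 (M / p ^ 2), ‖f n‖ ^ 2 ≤ S :=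
    sum_le_sum_of_subset_of_nonneg hsub fun _ _ _ => sq_nonneg _
  have hdivided :
      ∑ n ∈ Icc 1 (M / p ^ 2), (if p ^ 2 ∣ n then ‖f (n / p ^ 2)‖ ^ 2 else 0) ≤ S :=
    (sum_Icc_ite_dvd_div_le hp2 _ fun _ => sq_nonneg _).trans hsame
  calc ‖f (p ^ 2)‖ ^ 2 * ∑ n ∈ Icc 1 (M / p ^ 2), ‖f n‖ ^ 2
      ≤ ∑ n ∈ Icc 1 (M / p ^ 2), 3 * (‖f (p ^ 2 * n)‖ ^ 2 + ‖f n‖ ^ 2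
          + if p ^ 2 ∣ n then ‖f (n / p ^ 2)‖ ^ 2 else 0) := by
        rw [mul_sum]
        exact sum_le_sum fun n hn => hf.norm_sq_mul_le hp (mem_Icc.1 hn).1
    _ ≤ 3 * (S + S + S) := by
        rw [← mul_sum, sum_add_distrib, sum_add_distrib]
        gcongr
    _ = 9 * S := by ring

end HeckeMult

theorem hecke_sum_p2_general (f : ℕ → ℂ) (hf : HeckeMult f) (x : ℝ)
    (p : ℕ) (hp : p.Prime) :
    ‖f (p ^ 2)‖ ^ 2 * ∑ n ∈ Finset.Icc 1 ⌊x / (p : ℝ) ^ 2⌋₊, ‖f n‖ ^ 2 ≤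
      9 * ∑ n ∈ Finset.Icc 1 ⌊x⌋₊, ‖f n‖ ^ 2 := by
  have hfloor : ⌊x / (p : ℝ) ^ 2⌋₊ = ⌊x⌋₊ / p ^ 2 := by
    exact_mod_cast Nat.floor_div_natCast x (p ^ 2)
  rw [hfloor]
  exact hf.norm_sq_mul_sum_le hp _

theorem hecke_sum_p2 (f : ℕ → ℂ) (hf : HeckeMult f) (x : ℝ) (hx : 1 ≤ x)
    (p : ℕ) (hp : p.Prime) (hpx : ((p : ℝ)) ^ 2 ≤ x) :
    ‖f (p ^ 2)‖ ^ 2 * ∑ n ∈ Finset.Icc 1 ⌊x / (p : ℝ) ^ 2⌋₊, ‖f n‖ ^ 2 ≤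
      9 * ∑ n ∈ Finset.Icc 1 ⌊x⌋₊, ‖f n‖ ^ 2 :=
  hecke_sum_p2_general f hf x p hp
end

section
/- If f is a Hecke-multiplicative function and d is a squarefree positive integer, then for any positive integers m, |f(md)| ≤ Σ_{ab = d} |f(a)|·|f(m/b)|, where f(m/b) = 0 if b ∤ m. -/
open Finset

/-!
Applying the Hecke relation to `m / e` and `n / e` for every divisor `e` of `g = gcd m n` writes
`f (m / e) * f (n / e)` as a divisor sum of values `f (m * n / k ^ 2)`; Möbius inversion over the
divisors of `g` turns this around into `f (m * n) = ∑_{e ∣ g} μ(e) f(m / e) f(n / e)`.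
With `n = d`, the triangle inequality and `|μ| ≤ 1` bound `‖f (m * d)‖` by the sum over the divisors
`e` of `gcd m d`, which are exactly the divisors `b` of `d` with `b ∣ m`.
-/

open ArithmeticFunction

namespace HeckeMult

variable {f : ℕ → ℂ}

theorem apply_div_mul_apply_div (hf : HeckeMult f) {m n e : ℕ} (hm : 0 < m) (hn : 0 < n)
    (he : e ∣ m.gcd n) :
    f (m / e) * f (n / e) = ∑ c ∈ (m.gcd n / e).divisors, f (m * n / (e * c) ^ 2) := by
  have hem : e ∣ m := he.trans (Nat.gcd_dvd_left m n)
  have hen : e ∣ n := he.trans (Nat.gcd_dvd_right m n)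
  have he0 : 0 < e := Nat.pos_of_dvd_of_pos hem hm
  rw [hf.2 _ _ (Nat.div_pos (Nat.le_of_dvd hm hem) he0) (Nat.div_pos (Nat.le_of_dvd hn hen) he0),
    Nat.gcd_div hem hen, Nat.div_mul_div_comm hem hen]
  simp_rw [Nat.div_div_eq_div_mul, mul_pow, sq]

theorem apply_mul_eq_sum_moebius (hf : HeckeMult f) {m n : ℕ} (hm : 0 < m) (hn : 0 < n) :
    f (m * n) = ∑ e ∈ (m.gcd n).divisors, (moebius e : ℂ) * (f (m / e) * f (n / e)) := by
  set g := m.gcd n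
  have hg : 0 < g := Nat.gcd_pos_of_pos_left n hm
  have inversion := (sum_eq_iff_sum_mul_moebius_eq_on {k | k ∣ g}
    (fun a b hab hb => hab.trans hb)
    (f := fun c => f (m * n / (g / c) ^ 2)) (g := fun k => f (m / (g / k)) * f (n / (g / k)))).mp
    (fun k hk hk_mem => by
      have hkg : k ∣ g := hk_mem
      rw [hf.apply_div_mul_apply_div hm hn (Nat.div_dvd_of_dvd hkg), Nat.div_div_self hkg hg.ne',
        ← Nat.sum_div_divisors]
      refine sum_congr rfl fun c hc => ?_
      have hck : c ∣ k := Nat.dvd_of_mem_divisors hc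
      have hkc : 0 < k / c := Nat.div_pos (Nat.le_of_dvd hk hck) (Nat.pos_of_mem_divisors hc)
      have hfactor : g = g / k * c * (k / c) := by
        rw [mul_assoc, Nat.mul_div_cancel' hck, Nat.div_mul_cancel hkg]
      conv_lhs => rw [hfactor, Nat.mul_div_cancel _ hkc]) g hg dvd_rfl
  simp only [Nat.div_self hg, one_pow, Nat.div_one] at inversion
  rw [← inversion, Nat.sum_divisorsAntidiagonal
    (fun a b => (moebius a : ℂ) * (f (m / (g / b)) * f (n / (g / b))))]
  refine sum_congr rfl fun e he => ?_
  rw [Nat.div_div_self (Nat.dvd_of_mem_divisors he) hg.ne']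

end HeckeMult

theorem hecke_fmd (f : ℕ → ℂ) (hf : HeckeMult f) (d : ℕ) (hd : Squarefree d)
    (m : ℕ) (hm : 0 < m) :
    ‖f (m * d)‖ ≤
      ∑ ab ∈ Nat.divisorsAntidiagonal d,
        ‖f ab.1‖ * ‖(if ab.2 ∣ m then f (m / ab.2) else 0)‖ := by
  have hd0 : d ≠ 0 := hd.ne_zero
  rw [hf.apply_mul_eq_sum_moebius hm (Nat.pos_of_ne_zero hd0),
    Nat.sum_divisorsAntidiagonal' (fun a b => ‖f a‖ * ‖(if b ∣ m then f (m / b) else 0)‖)]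
  calc ‖∑ e ∈ (m.gcd d).divisors, (moebius e : ℂ) * (f (m / e) * f (d / e))‖
      ≤ ∑ e ∈ (m.gcd d).divisors, ‖f (d / e)‖ * ‖f (m / e)‖ := by
        refine (norm_sum_le _ _).trans (sum_le_sum fun e _ => ?_)
        rw [norm_mul, norm_mul, mul_comm ‖f (m / e)‖]
        refine mul_le_of_le_one_left (by positivity) ?_
        rw [Complex.norm_intCast]
        exact_mod_cast abs_moebius_le_one
    _ = ∑ e ∈ (m.gcd d).divisors, ‖f (d / e)‖ * ‖(if e ∣ m then f (m / e) else 0)‖ :=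
        sum_congr rfl fun e he => by
          rw [if_pos ((Nat.dvd_of_mem_divisors he).trans (Nat.gcd_dvd_left m d))]
    _ ≤ ∑ e ∈ d.divisors, ‖f (d / e)‖ * ‖(if e ∣ m then f (m / e) else 0)‖ :=
        sum_le_sum_of_subset_of_nonneg (Nat.divisors_subset_of_dvd hd0 (Nat.gcd_dvd_right m d))
          fun _ _ _ => by positivity
end

section
/- If f is a Hecke-multiplicative function and d is a squarefree positive integer, then for any positive integer m, |f(md²)| ≤ Σ_{abc = d} |f(a²)|·|f(m/c²)|, where f(m/c²) = 0 if c² ∤ m. -/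
/-!
Induct on the prime factors of `d`. For a prime `p`, the Hecke relation for `n` and `p²` reads
`f(n p²) = f(n) f(p²) - [p ∣ n] f(n) - f(n / p²)`, whence
`|f(n p²)| ≤ |f(p²)| |f(n)| + |f(n)| + |f(n / p²)|`. For `d = p e` with `p ∤ e`, apply the bound
for `e` to `m p²` and this estimate to each `f(m p² / c²) = f((m / c²) p²)`: the three resulting
terms are those of the triples `(p a, b, c)`, `(a, p b, c)` and `(a, b, p c)` in the sum for `d`,
because `f(p²) f(a²) = f((p a)²)` when `p ∤ a`.
-/

open Finset

theorem Nat.Prime.sum_divisors_mul_of_not_dvd {M : Type*} [AddCommMonoid M] {p e : ℕ}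
    (hp : p.Prime) (hpe : ¬ p ∣ e) (F : ℕ → M) :
    ∑ a ∈ (p * e).divisors, F a = ∑ a ∈ e.divisors, (F a + F (p * a)) := by
  rw [Nat.Coprime.divisors_mul (hp.coprime_iff_not_dvd.mpr hpe), sum_map]
  refine (sum_attach (Nat.divisors p ×ˢ Nat.divisors e) fun q => F (q.1 * q.2)).trans ?_
  rw [sum_product, hp.divisors, sum_pair hp.one_lt.ne, ← sum_add_distrib]
  simp only [one_mul]

def divSq (f : ℕ → ℂ) (m c : ℕ) : ℂ := if c ^ 2 ∣ m then f (m / c ^ 2) else 0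

noncomputable def heckeBound (f : ℕ → ℂ) (d m : ℕ) : ℝ :=
  ∑ a ∈ d.divisors, ∑ c ∈ (d / a).divisors, ‖f (a ^ 2)‖ * ‖divSq f m c‖

theorem divSq_sq_mul {f : ℕ → ℂ} {b c : ℕ} (hc : 0 < c) (t : ℕ) :
    divSq f (c ^ 2 * t) (b * c) = divSq f t b := by
  have hc2 : 0 < c ^ 2 := pow_pos hc 2
  simp only [divSq, mul_pow, mul_comm (b ^ 2), Nat.mul_dvd_mul_iff_left hc2,
    Nat.mul_div_mul_left _ _ hc2]

theorem divSq_sq_mul_self {f : ℕ → ℂ} {c : ℕ} (hc : 0 < c) (t : ℕ) :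
    divSq f (c ^ 2 * t) c = f t := by
  simpa [divSq] using divSq_sq_mul (f := f) (b := 1) hc t

namespace HeckeMult

variable {f : ℕ → ℂ}

theorem map_mul_of_coprime (hf : HeckeMult f) {a b : ℕ} (ha : 0 < a) (hb : 0 < b)
    (hab : a.Coprime b) : f (a * b) = f a * f b := by
  rw [hf.2 a b ha hb, hab]
  simp

theorem map_mul_prime_sq (hf : HeckeMult f) {p n : ℕ} (hp : p.Prime) (hn : 0 < n) :
    f (n * p ^ 2) = f n * f (p ^ 2) - (if p ∣ n then f n else 0) - divSq f n p := by
  have hp2 : 0 < p ^ 2 := pow_pos hp.pos 2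
  have hecke := hf.2 n (p ^ 2) hn hp2
  by_cases hpn : p ∣ n
  · by_cases hp2n : p ^ 2 ∣ n
    · have hp2p : p ^ 2 ∉ ({p, 1} : Finset ℕ) := by
        simp [(lt_self_pow₀ hp.one_lt one_lt_two).ne', hp.ne_one]
      rw [Nat.gcd_eq_right hp2n, hp.divisors_sq, sum_insert hp2p, sum_pair hp.one_lt.ne',
        sq (p ^ 2), Nat.mul_div_mul_right _ _ hp2, Nat.mul_div_cancel _ hp2, one_pow,
        Nat.div_one] at hecke
      rw [if_pos hpn, divSq, if_pos hp2n]
      linear_combination -hecke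
    · obtain ⟨t, rfl⟩ := hpn
      have hpt : ¬ p ∣ t := fun h => hp2n (by rw [sq]; exact mul_dvd_mul_left p h)
      have hgcd : (p * t).gcd (p ^ 2) = p := by
        rw [sq, Nat.gcd_mul_left, (hp.coprime_iff_not_dvd.mpr hpt).symm, mul_one]
      rw [hgcd, hp.divisors, sum_pair hp.one_lt.ne, one_pow, Nat.div_one,
        Nat.mul_div_cancel _ hp2] at hecke
      rw [if_pos (dvd_mul_right p t), divSq, if_neg hp2n]
      linear_combination -hecke
  · have hcop : n.Coprime (p ^ 2) := ((hp.coprime_iff_not_dvd.mpr hpn).symm).pow_right 2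
    have hp2n : ¬ p ^ 2 ∣ n := fun h => hpn ((dvd_pow_self p two_ne_zero).trans h)
    rw [hcop, Nat.divisors_one, sum_singleton, one_pow, Nat.div_one] at hecke
    simp [divSq, hpn, hp2n, hecke]

theorem norm_map_mul_prime_sq_le (hf : HeckeMult f) {p n : ℕ} (hp : p.Prime) (hn : 0 < n) :
    ‖f (n * p ^ 2)‖ ≤ ‖f (p ^ 2)‖ * ‖f n‖ + ‖f n‖ + ‖divSq f n p‖ := by
  have hite : ‖if p ∣ n then f n else 0‖ ≤ ‖f n‖ := by split_ifs <;> simp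
  calc ‖f (n * p ^ 2)‖
      = ‖f n * f (p ^ 2) - (if p ∣ n then f n else 0) - divSq f n p‖ := by
        rw [hf.map_mul_prime_sq hp hn]
    _ ≤ ‖f n * f (p ^ 2)‖ + ‖if p ∣ n then f n else 0‖ + ‖divSq f n p‖ :=
        (norm_sub_le _ _).trans (add_le_add_left (norm_sub_le _ _) _)
    _ ≤ ‖f (p ^ 2)‖ * ‖f n‖ + ‖f n‖ + ‖divSq f n p‖ := by
        rw [norm_mul, mul_comm]; gcongr

theorem norm_divSq_mul_prime_sq_le (hf : HeckeMult f) {p m c : ℕ} (hp : p.Prime) (hm : 0 < m)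
    (hpc : ¬ p ∣ c) :
    ‖divSq f (m * p ^ 2) c‖ ≤
      ‖f (p ^ 2)‖ * ‖divSq f m c‖ + ‖divSq f m c‖ + ‖divSq f m (p * c)‖ := by
  by_cases hcm : c ^ 2 ∣ m
  · obtain ⟨t, rfl⟩ := hcm
    have hc : 0 < c := Nat.pos_of_ne_zero fun h => by simp [h] at hm
    rw [mul_assoc, divSq_sq_mul_self hc, divSq_sq_mul_self hc, divSq_sq_mul hc]
    exact hf.norm_map_mul_prime_sq_le hp (Nat.pos_of_mul_pos_left hm)
  · have hcop : (c ^ 2).Coprime (p ^ 2) :=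
      ((hp.coprime_iff_not_dvd.mpr hpc).symm).pow 2 2
    rw [divSq, if_neg fun h => hcm (hcop.dvd_of_dvd_mul_right h), norm_zero]
    positivity

theorem heckeBound_mul_prime_sq_le (hf : HeckeMult f) {p e m : ℕ} (hp : p.Prime)
    (hpe : ¬ p ∣ e) (hm : 0 < m) :
    heckeBound f e (m * p ^ 2) ≤ heckeBound f (p * e) m := by
  have not_dvd_of_dvd {a : ℕ} (ha : a ∣ e) : ¬ p ∣ a := fun h => hpe (h.trans ha)
  let w c := ‖divSq f m c‖
  calc heckeBound f e (m * p ^ 2)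
      ≤ ∑ a ∈ e.divisors, ∑ c ∈ (e / a).divisors,
          ‖f (a ^ 2)‖ * (‖f (p ^ 2)‖ * w c + w c + w (p * c)) := by
        unfold heckeBound
        gcongr with a ha c hc
        exact hf.norm_divSq_mul_prime_sq_le hp hm <| not_dvd_of_dvd <|
          (Nat.dvd_of_mem_divisors hc).trans (Nat.div_dvd_of_dvd (Nat.dvd_of_mem_divisors ha))
    _ = heckeBound f (p * e) m := by
        rw [heckeBound, hp.sum_divisors_mul_of_not_dvd hpe]
        refine sum_congr rfl fun a ha => ?_
        have hae : a ∣ e := Nat.dvd_of_mem_divisors ha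
        have ha0 : 0 < a := Nat.pos_of_mem_divisors ha
        rw [Nat.mul_div_assoc p hae, Nat.mul_div_mul_left e a hp.pos,
          hp.sum_divisors_mul_of_not_dvd (not_dvd_of_dvd (Nat.div_dvd_of_dvd hae)),
          ← sum_add_distrib]
        refine sum_congr rfl fun c _ => ?_
        rw [mul_pow, hf.map_mul_of_coprime (pow_pos hp.pos 2) (pow_pos ha0 2)
          ((hp.coprime_iff_not_dvd.mpr (not_dvd_of_dvd hae)).pow 2 2), norm_mul]
        ring

theorem norm_map_mul_prod_sq_le (hf : HeckeMult f) (s : Finset ℕ) (hs : ∀ p ∈ s, p.Prime)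
    (m : ℕ) (hm : 0 < m) :
    ‖f (m * (∏ p ∈ s, p) ^ 2)‖ ≤ heckeBound f (∏ p ∈ s, p) m := by
  induction s using Finset.induction_on generalizing m with
  | empty => simp [heckeBound, divSq, hf.1]
  | insert p s hps ih =>
    have hp := hs p (mem_insert_self p s)
    have hs' : ∀ q ∈ s, q.Prime := fun q hq => hs q (mem_insert_of_mem hq)
    have hpe : ¬ p ∣ ∏ q ∈ s, q := fun h => by
      obtain ⟨q, hq, hpq⟩ := (Prime.dvd_finsetProd_iff hp.prime _).mp h
      exact hps ((Nat.prime_dvd_prime_iff_eq hp (hs' q hq)).mp hpq ▸ hq)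
    rw [prod_insert hps, mul_pow, ← mul_assoc]
    exact (ih hs' _ (Nat.mul_pos hm (pow_pos hp.pos 2))).trans
      (hf.heckeBound_mul_prime_sq_le hp hpe hm)

end HeckeMult

theorem hecke_fmd2 (f : ℕ → ℂ) (hf : HeckeMult f) (d : ℕ) (hd : Squarefree d)
    (m : ℕ) (hm : 0 < m) :
    ‖f (m * d ^ 2)‖ ≤
      ∑ a ∈ d.divisors, ∑ c ∈ (d / a).divisors,
        ‖f (a ^ 2)‖ *
          ‖(if c ^ 2 ∣ m then f (m / c ^ 2) else 0)‖ := by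
  have h := hf.norm_map_mul_prod_sq_le d.primeFactors
    (fun _ => Nat.prime_of_mem_primeFactors) m hm
  rwa [Nat.prod_primeFactors_of_squarefree hd] at h
end

section
/- If f is a Hecke-multiplicative function and d is a squarefree positive integer, then for any positive integer m, |f(md)|² ≤ τ(d) · Σ_{ab = d} |f(a)|²·|f(m/b)|², where τ(d) is the number of divisors of d and f(m/b) = 0 if b ∤ m. -/
/-!
Möbius inversion of the Hecke relation gives
`f (m * n) = ∑_{e ∣ gcd m n} μ e f (m / e) f (n / e)`. Taking `n = d`, the triangle inequality
with `|μ| ≤ 1` and Cauchy–Schwarz bound `‖f (m d)‖²` by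
`τ (gcd m d) ∑_{e ∣ gcd m d} ‖f (d / e)‖² ‖f (m / e)‖²`, and the divisors of `gcd m d` are
exactly the `b ∣ d` with `b ∣ m`.
-/

open Finset

open ArithmeticFunction
open scoped ArithmeticFunction.Moebius

namespace HeckeMult

variable {f : ℕ → ℂ}

theorem mul_eq_sum (hf : HeckeMult f) {m n : ℕ} (hm : 0 < m) (hn : 0 < n) :
    f m * f n = ∑ c ∈ (m.gcd n).divisors, f (m / c * (n / c)) := by
  rw [hf.2 m n hm hn]
  refine sum_congr rfl fun c hc => ?_
  have hcg := Nat.dvd_of_mem_divisors hc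
  rw [Nat.div_mul_div_comm (hcg.trans (Nat.gcd_dvd_left m n)) (hcg.trans (Nat.gcd_dvd_right m n)),
    sq]

theorem apply_mul (hf : HeckeMult f) {m n : ℕ} (hm : 0 < m) (hn : 0 < n) :
    f (m * n) = ∑ e ∈ (m.gcd n).divisors, (μ e : ℂ) * (f (m / e) * f (n / e)) := by
  set g := m.gcd n
  have hg : 0 < g := Nat.gcd_pos_of_pos_left n hm
  -- Möbius inversion on the divisors of `g`: for `t ∣ g`, the Hecke relation for `m / (g / t)`
  -- and `n / (g / t)` is a divisor sum over `t` of `j ↦ f (m / (g / j) * (n / (g / j)))`.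
  have hdiv : ∀ t > 0, t ∈ {t | t ∣ g} → ∑ j ∈ t.divisors, f (m / (g / j) * (n / (g / j))) =
      f (m / (g / t)) * f (n / (g / t)) := by
    rintro t ht ⟨e, hte⟩
    have he : 0 < e := Nat.pos_of_mul_pos_left (hte ▸ hg)
    have hgt : g / t = e := by rw [hte, Nat.mul_div_cancel_left _ ht]
    have hem : e ∣ m := (Dvd.intro_left t hte.symm).trans (Nat.gcd_dvd_left m n)
    have hen : e ∣ n := (Dvd.intro_left t hte.symm).trans (Nat.gcd_dvd_right m n)
    rw [hgt, hf.mul_eq_sum (Nat.div_pos (Nat.le_of_dvd hm hem) he)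
      (Nat.div_pos (Nat.le_of_dvd hn hen) he), Nat.gcd_div hem hen, ← hgt,
      Nat.div_div_self ⟨e, hte⟩ hg.ne', ← Nat.sum_div_divisors]
    refine sum_congr rfl fun c hc => ?_
    obtain ⟨k, rfl⟩ := Nat.dvd_of_mem_divisors hc
    have hc0 : 0 < c := Nat.pos_of_mul_pos_right ht
    have hge : g / (c * k / c) = e * c := by
      rw [Nat.mul_div_cancel_left k hc0, hte]
      exact Nat.div_eq_of_eq_mul_left (Nat.pos_of_mul_pos_left ht) (by ring)
    rw [hge, hgt, Nat.div_div_eq_div_mul, Nat.div_div_eq_div_mul]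
  have hinv :=
    (sum_eq_iff_sum_mul_moebius_eq_on {t | t ∣ g} fun _ _ => dvd_trans).mp hdiv g hg dvd_rfl
  rw [Nat.sum_divisorsAntidiagonal (fun a b => (μ a : ℂ) * (f (m / (g / b)) * f (n / (g / b)))),
    Nat.div_self hg, Nat.div_one, Nat.div_one] at hinv
  rw [← hinv]
  refine sum_congr rfl fun a ha => ?_
  rw [Nat.div_div_self (Nat.dvd_of_mem_divisors ha) hg.ne']

theorem norm_apply_mul_le (hf : HeckeMult f) {m n : ℕ} (hm : 0 < m) (hn : 0 < n) :
    ‖f (m * n)‖ ≤ ∑ e ∈ (m.gcd n).divisors, ‖f (m / e)‖ * ‖f (n / e)‖ := by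
  rw [hf.apply_mul hm hn]
  refine (norm_sum_le _ _).trans (sum_le_sum fun e _ => ?_)
  have hμ : ‖(μ e : ℂ)‖ ≤ 1 := by
    rw [Complex.norm_intCast]
    exact_mod_cast abs_moebius_le_one
  rw [norm_mul, norm_mul]
  exact mul_le_of_le_one_left (by positivity) hμ

end HeckeMult

theorem Nat.sum_divisorsAntidiagonal_ite_dvd {M : Type*} [AddCommMonoid M] (h : ℕ → ℕ → M)
    {m d : ℕ} (hd : d ≠ 0) :
    ∑ ab ∈ d.divisorsAntidiagonal, (if ab.2 ∣ m then h ab.1 ab.2 else 0) =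
      ∑ e ∈ (m.gcd d).divisors, h (d / e) e := by
  rw [Nat.sum_divisorsAntidiagonal' (fun a b => if b ∣ m then h a b else 0), ← sum_filter]
  congr 1
  ext e
  have hgcd : m.gcd d ≠ 0 := Nat.gcd_ne_zero_right hd
  simp only [mem_filter, Nat.mem_divisors, Nat.dvd_gcd_iff]
  tauto

theorem hecke_fmd_sq (f : ℕ → ℂ) (hf : HeckeMult f) (d : ℕ) (hd : Squarefree d)
    (m : ℕ) (hm : 0 < m) :
    ‖f (m * d)‖ ^ 2 ≤
      (d.divisors.card : ℝ) *
        ∑ ab ∈ Nat.divisorsAntidiagonal d,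
          ‖f ab.1‖ ^ 2 *
            ‖(if ab.2 ∣ m then f (m / ab.2) else 0)‖ ^ 2 := by
  have hd0 := hd.ne_zero
  have hsum : ∑ ab ∈ d.divisorsAntidiagonal,
        ‖f ab.1‖ ^ 2 * ‖if ab.2 ∣ m then f (m / ab.2) else 0‖ ^ 2 =
      ∑ e ∈ (m.gcd d).divisors, (‖f (m / e)‖ * ‖f (d / e)‖) ^ 2 := by
    rw [← Nat.sum_divisorsAntidiagonal_ite_dvd (fun a b => (‖f (m / b)‖ * ‖f a‖) ^ 2) hd0]
    refine sum_congr rfl fun ab _ => ?_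
    split_ifs <;> simp [mul_pow, mul_comm]
  rw [hsum]
  calc ‖f (m * d)‖ ^ 2
      ≤ (∑ e ∈ (m.gcd d).divisors, ‖f (m / e)‖ * ‖f (d / e)‖) ^ 2 := by
        gcongr
        exact hf.norm_apply_mul_le hm (Nat.pos_of_ne_zero hd0)
    _ ≤ ((m.gcd d).divisors.card : ℝ) *
          ∑ e ∈ (m.gcd d).divisors, (‖f (m / e)‖ * ‖f (d / e)‖) ^ 2 :=
        sq_sum_le_card_mul_sum_sq
    _ ≤ _ := by
        gcongr
        exact Nat.gcd_dvd_right m d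
end

section
/- Let f be a Hecke-multiplicative function, x ≥ 1 real, d a squarefree positive integer, and y ≥ 1. Then Σ_{n ≤ x/y, d² | n} |f(n)|² ≤ τ₃(d) · (∏_{p | d} (2 + |f(p²)|²)) · F(yd²) · Σ_{n ≤ x} |f(n)|², where τ₃(d) = #{(a,b,c) : abc = d} and F(t) = (Σ_{n ≤ x/t} |f(n)|²)/(Σ_{n ≤ x} |f(n)|²). -/
/-!
Cauchy–Schwarz applied to the Hecke recursion
`f(p^(a+2)) = f(p²) f(p^a) - f(p^a) - f(p^(a-2))` gives
`|f(p^(a+2))|² ≤ (2 + |f(p²)|²) (2 |f(p^a)|² + |f(p^(a-2))|²)`, and multiplicativity on coprime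
arguments transfers this to `|f(p² n)|²` with `n` in place of `p^a`. Summed over `n ≤ M`, the
last term only runs over `n ≤ M / p²`, so removing one prime `p` of the squarefree `d` costs a
factor `3 (2 + |f(p²)|²)`; this matches `τ₃(p t) = 3 τ₃(t)`.
-/

open Finset

theorem norm_mul_add_add_sq_le (z u v w : ℂ) :
    ‖z * u + v + w‖ ^ 2 ≤ (2 + ‖z‖ ^ 2) * (‖u‖ ^ 2 + ‖v‖ ^ 2 + ‖w‖ ^ 2) := by
  have := norm_add₃_le (a := z * u) (b := v) (c := w)
  rw [norm_mul] at this
  nlinarith [sq_nonneg (‖z‖ * ‖v‖ - ‖u‖), sq_nonneg (‖z‖ * ‖w‖ - ‖u‖),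
    sq_nonneg (‖v‖ - ‖w‖), norm_nonneg (z * u + v + w), norm_nonneg z, norm_nonneg u,
    norm_nonneg v, norm_nonneg w]

theorem sum_filter_dvd_Icc_eq {M : Type*} [AddCommMonoid M] (g : ℕ → M) {q : ℕ} (hq : 0 < q)
    (N : ℕ) : ∑ n ∈ (Icc 1 N).filter (q ∣ ·), g n = ∑ k ∈ Icc 1 (N / q), g (q * k) := by
  rw [← sum_image fun a _ b _ h => Nat.eq_of_mul_eq_mul_left hq h]
  congr 1
  ext n
  simp only [mem_filter, mem_Icc, mem_image]
  constructor
  · rintro ⟨⟨hn1, hnN⟩, k, rfl⟩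
    exact ⟨k, ⟨Nat.pos_of_mul_pos_left hn1, (Nat.le_div_iff_mul_le hq).mpr (by linarith)⟩, rfl⟩
  · rintro ⟨k, ⟨hk1, hkN⟩, rfl⟩
    exact ⟨⟨Nat.mul_pos hq hk1, by nlinarith [Nat.div_mul_le_self N q]⟩, dvd_mul_right q k⟩

theorem sum_card_divisors_div_eq_zeta_mul_sigma_zero (n : ℕ) :
    ∑ a ∈ n.divisors, (n / a).divisors.card =
      (ArithmeticFunction.zeta * ArithmeticFunction.sigma 0) n := by
  rw [ArithmeticFunction.zeta_mul_apply, Nat.sum_div_divisors n (fun i => i.divisors.card)]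
  simp only [ArithmeticFunction.sigma_zero_apply]

theorem sum_card_divisors_div_prime_mul {p t : ℕ} (hp : p.Prime) (hpt : p.Coprime t) :
    ∑ a ∈ (p * t).divisors, (p * t / a).divisors.card =
      3 * ∑ a ∈ t.divisors, (t / a).divisors.card := by
  simp only [sum_card_divisors_div_eq_zeta_mul_sigma_zero]
  rw [(ArithmeticFunction.isMultiplicative_zeta.mul
    ArithmeticFunction.isMultiplicative_sigma).map_mul_of_coprime hpt,
    ArithmeticFunction.zeta_mul_apply, hp.divisors, sum_pair hp.one_lt.ne]
  simp [ArithmeticFunction.sigma_zero_apply, hp.divisors, card_pair hp.one_lt.ne]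

namespace HeckeMult

variable {f : ℕ → ℂ}

theorem prime_pow_mul_prime_pow (hf : HeckeMult f) {p : ℕ} (hp : p.Prime) {k a : ℕ}
    (hka : k ≤ a) :
    f (p ^ k) * f (p ^ a) = ∑ i ∈ range (k + 1), f (p ^ (k + a - 2 * i)) := by
  rw [hf.2 _ _ (pow_pos hp.pos k) (pow_pos hp.pos a), Nat.gcd_eq_left (pow_dvd_pow p hka),
    Nat.sum_divisors_prime_pow hp]
  refine sum_congr rfl fun i hi => ?_
  rw [← pow_add, ← pow_mul, Nat.pow_div (by grind) hp.pos, mul_comm i]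

theorem norm_sq_prime_pow_add_two_le (hf : HeckeMult f) {p : ℕ} (hp : p.Prime) (a : ℕ) :
    ‖f (p ^ (a + 2))‖ ^ 2 ≤ (2 + ‖f (p ^ 2)‖ ^ 2) *
      (2 * ‖f (p ^ a)‖ ^ 2 + if 2 ≤ a then ‖f (p ^ (a - 2))‖ ^ 2 else 0) := by
  match a with
  | 0 =>
    simp only [pow_zero, hf.1]
    norm_num
    nlinarith [sq_nonneg ‖f (p ^ 2)‖]
  | 1 =>
    have h := hf.prime_pow_mul_prime_pow hp (show 1 ≤ 2 by norm_num)
    simp only [sum_range_succ, sum_range_zero, zero_add] at h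
    have hrec : f (p ^ 3) = f (p ^ 2) * f (p ^ 1) + -f (p ^ 1) + 0 := by
      rw [mul_comm, h]; norm_num
    have := norm_mul_add_add_sq_le (f (p ^ 2)) (f (p ^ 1)) (-f (p ^ 1)) 0
    rw [← hrec] at this
    norm_num at this ⊢
    linarith
  | b + 2 =>
    have h := hf.prime_pow_mul_prime_pow hp (show 2 ≤ b + 2 by omega)
    simp only [sum_range_succ, sum_range_zero, zero_add] at h
    rw [show 2 + (b + 2) - 2 * 0 = b + 2 + 2 by omega, show 2 + (b + 2) - 2 * 1 = b + 2 by omega,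
      show 2 + (b + 2) - 2 * 2 = b by omega] at h
    have hrec : f (p ^ (b + 2 + 2)) = f (p ^ 2) * f (p ^ (b + 2)) + -f (p ^ (b + 2)) + -f (p ^ b) := by
      rw [h]; ring
    have := norm_mul_add_add_sq_le (f (p ^ 2)) (f (p ^ (b + 2))) (-f (p ^ (b + 2))) (-f (p ^ b))
    rw [← hrec, norm_neg, norm_neg] at this
    simp only [le_add_iff_nonneg_left, zero_le, if_true, Nat.add_sub_cancel]
    linarith

theorem norm_sq_prime_sq_mul_le (hf : HeckeMult f) {p : ℕ} (hp : p.Prime) {n : ℕ} (hn : 0 < n) :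
    ‖f (p ^ 2 * n)‖ ^ 2 ≤ (2 + ‖f (p ^ 2)‖ ^ 2) *
      (2 * ‖f n‖ ^ 2 + if p ^ 2 ∣ n then ‖f (n / p ^ 2)‖ ^ 2 else 0) := by
  set a := n.factorization p
  set n' := n / p ^ a
  have hn_eq : n = p ^ a * n' := (Nat.ordProj_mul_ordCompl_eq_self n p).symm
  have hsplit (k : ℕ) : ‖f (p ^ k * n')‖ ^ 2 = ‖f (p ^ k)‖ ^ 2 * ‖f n'‖ ^ 2 := by
    rw [hf.map_mul_of_coprime (pow_pos hp.pos k) (Nat.ordCompl_pos p hn.ne')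
      ((Nat.coprime_ordCompl hp hn.ne').pow_left k), norm_mul, mul_pow]
  have hbound := mul_le_mul_of_nonneg_right (hf.norm_sq_prime_pow_add_two_le hp a)
    (sq_nonneg ‖f n'‖)
  have hdvd : p ^ 2 ∣ n ↔ 2 ≤ a := hp.pow_dvd_iff_le_factorization hn.ne'
  rw [show p ^ 2 * n = p ^ (a + 2) * n' by rw [hn_eq]; ring, hsplit]
  split_ifs at hbound ⊢ with h2n h2a h2a
  · have hquot : n / p ^ 2 = p ^ (a - 2) * n' := by
      rw [Nat.div_eq_iff_eq_mul_left (pow_pos hp.pos 2) h2n, hn_eq, mul_right_comm,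
        ← pow_add, Nat.sub_add_cancel h2a]
    rw [hquot, hsplit, hn_eq, hsplit]
    linarith
  · exact absurd (hdvd.mp h2n) h2a
  · exact absurd (hdvd.mpr h2a) h2n
  · rw [hn_eq, hsplit]
    linarith

theorem sum_norm_sq_sq_mul_prime_mul_le (hf : HeckeMult f) {p t : ℕ} (hp : p.Prime)
    (hpt : p.Coprime t) (M : ℕ) :
    ∑ m ∈ Icc 1 M, ‖f ((p * t) ^ 2 * m)‖ ^ 2 ≤ (2 + ‖f (p ^ 2)‖ ^ 2) *
      (2 * ∑ m ∈ Icc 1 M, ‖f (t ^ 2 * m)‖ ^ 2 +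
        ∑ k ∈ Icc 1 (M / p ^ 2), ‖f (t ^ 2 * k)‖ ^ 2) := by
  have ht : 0 < t := Nat.pos_of_ne_zero fun h => hp.one_lt.ne' (by simpa [h] using hpt)
  have hpt2 : (p ^ 2).Coprime (t ^ 2) := Nat.Coprime.pow 2 2 hpt
  have hterm (m : ℕ) : (if p ^ 2 ∣ t ^ 2 * m then ‖f (t ^ 2 * m / p ^ 2)‖ ^ 2 else 0) =
      if p ^ 2 ∣ m then ‖f (t ^ 2 * (m / p ^ 2))‖ ^ 2 else 0 := by
    by_cases h : p ^ 2 ∣ m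
    · rw [if_pos (hpt2.dvd_mul_left.mpr h), if_pos h, Nat.mul_div_assoc _ h]
    · rw [if_neg (mt hpt2.dvd_mul_left.mp h), if_neg h]
  calc ∑ m ∈ Icc 1 M, ‖f ((p * t) ^ 2 * m)‖ ^ 2
      = ∑ m ∈ Icc 1 M, ‖f (p ^ 2 * (t ^ 2 * m))‖ ^ 2 := by simp only [mul_pow, mul_assoc]
    _ ≤ ∑ m ∈ Icc 1 M, (2 + ‖f (p ^ 2)‖ ^ 2) * (2 * ‖f (t ^ 2 * m)‖ ^ 2 +
          if p ^ 2 ∣ m then ‖f (t ^ 2 * (m / p ^ 2))‖ ^ 2 else 0) := by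
      refine sum_le_sum fun m hm => ?_
      rw [← hterm]
      exact hf.norm_sq_prime_sq_mul_le hp (Nat.mul_pos (pow_pos ht 2) (mem_Icc.mp hm).1)
    _ = (2 + ‖f (p ^ 2)‖ ^ 2) * (2 * ∑ m ∈ Icc 1 M, ‖f (t ^ 2 * m)‖ ^ 2 +
          ∑ k ∈ Icc 1 (M / p ^ 2), ‖f (t ^ 2 * k)‖ ^ 2) := by
      rw [← mul_sum, sum_add_distrib, ← mul_sum, ← sum_filter,
        sum_filter_dvd_Icc_eq _ (pow_pos hp.pos 2)]
      simp only [Nat.mul_div_cancel_left _ (pow_pos hp.pos 2)]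

theorem sum_norm_sq_sq_mul_le (hf : HeckeMult f) {d : ℕ} (hd : Squarefree d) (M : ℕ) :
    ∑ m ∈ Icc 1 M, ‖f (d ^ 2 * m)‖ ^ 2 ≤
      (∑ a ∈ d.divisors, (d / a).divisors.card : ℕ) *
        (∏ p ∈ d.primeFactors, (2 + ‖f (p ^ 2)‖ ^ 2)) * ∑ k ∈ Icc 1 M, ‖f k‖ ^ 2 := by
  induction d using induction_on_primes generalizing M with
  | zero => simp at hd
  | one => simp
  | prime_mul p t hp ih =>
    obtain ⟨hpt, -, ht⟩ := Nat.squarefree_mul_iff.mp hd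
    have hCp : 0 ≤ 2 + ‖f (p ^ 2)‖ ^ 2 := by positivity
    have hmono : ∑ k ∈ Icc 1 (M / p ^ 2), ‖f k‖ ^ 2 ≤ ∑ k ∈ Icc 1 M, ‖f k‖ ^ 2 :=
      sum_le_sum_of_subset_of_nonneg (Icc_subset_Icc_right (Nat.div_le_self _ _))
        fun _ _ _ => sq_nonneg _
    have hsmall : ∑ k ∈ Icc 1 (M / p ^ 2), ‖f (t ^ 2 * k)‖ ^ 2 ≤
        ((∑ a ∈ t.divisors, (t / a).divisors.card : ℕ) : ℝ) *
          (∏ q ∈ t.primeFactors, (2 + ‖f (q ^ 2)‖ ^ 2)) * ∑ k ∈ Icc 1 M, ‖f k‖ ^ 2 :=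
      (ih ht (M / p ^ 2)).trans (mul_le_mul_of_nonneg_left hmono
        (mul_nonneg (Nat.cast_nonneg _) (prod_nonneg fun _ _ => by positivity)))
    have hprod : ∏ q ∈ (p * t).primeFactors, (2 + ‖f (q ^ 2)‖ ^ 2) =
        (2 + ‖f (p ^ 2)‖ ^ 2) * ∏ q ∈ t.primeFactors, (2 + ‖f (q ^ 2)‖ ^ 2) := by
      rw [Nat.Coprime.primeFactors_mul hpt, hp.primeFactors, singleton_union,
        prod_insert fun h => (hp.coprime_iff_not_dvd.mp hpt) (Nat.dvd_of_mem_primeFactors h)]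
    calc ∑ m ∈ Icc 1 M, ‖f ((p * t) ^ 2 * m)‖ ^ 2
        ≤ (2 + ‖f (p ^ 2)‖ ^ 2) * (2 * ∑ m ∈ Icc 1 M, ‖f (t ^ 2 * m)‖ ^ 2 +
            ∑ k ∈ Icc 1 (M / p ^ 2), ‖f (t ^ 2 * k)‖ ^ 2) :=
          hf.sum_norm_sq_sq_mul_prime_mul_le hp hpt M
      _ ≤ (2 + ‖f (p ^ 2)‖ ^ 2) * (3 * (((∑ a ∈ t.divisors, (t / a).divisors.card : ℕ) : ℝ) *
            (∏ q ∈ t.primeFactors, (2 + ‖f (q ^ 2)‖ ^ 2)) * ∑ k ∈ Icc 1 M, ‖f k‖ ^ 2)) :=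
          mul_le_mul_of_nonneg_left (by linarith [ih ht M]) (by positivity)
      _ = _ := by
        rw [sum_card_divisors_div_prime_mul hp hpt, hprod]
        push_cast
        ring

end HeckeMult

theorem hecke_sum_div_d2_general (f : ℕ → ℂ) (hf : HeckeMult f) (x y : ℝ) (d : ℕ) (hd : Squarefree d)
    (htot : 0 < ∑ n ∈ Finset.Icc 1 ⌊x⌋₊, ‖f n‖ ^ 2)
    (F : ℝ → ℝ)
    (hF : ∀ t : ℝ, F t = (∑ n ∈ Finset.Icc 1 ⌊x / t⌋₊, ‖f n‖ ^ 2) /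
      (∑ n ∈ Finset.Icc 1 ⌊x⌋₊, ‖f n‖ ^ 2)) :
    ∑ n ∈ (Finset.Icc 1 ⌊x / y⌋₊).filter (fun n => d ^ 2 ∣ n), ‖f n‖ ^ 2 ≤
      (∑ a ∈ d.divisors, ((d / a).divisors.card : ℝ)) *
        (∏ p ∈ d.primeFactors, (2 + ‖f (p ^ 2)‖ ^ 2)) *
        F (y * (d : ℝ) ^ 2) * ∑ n ∈ Finset.Icc 1 ⌊x⌋₊, ‖f n‖ ^ 2 := by
  have hfloor : ⌊x / (y * (d : ℝ) ^ 2)⌋₊ = ⌊x / y⌋₊ / d ^ 2 := by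
    rw [← div_div, ← Nat.floor_div_natCast, Nat.cast_pow]
  rw [mul_assoc _ (F _), hF, div_mul_cancel₀ _ htot.ne', hfloor, ← Nat.cast_sum,
    sum_filter_dvd_Icc_eq _ (pow_pos (Nat.pos_of_ne_zero hd.ne_zero) 2)]
  exact hf.sum_norm_sq_sq_mul_le hd _

theorem hecke_sum_div_d2 (f : ℕ → ℂ) (hf : HeckeMult f) (x y : ℝ) (hx : 1 ≤ x)
    (hy : 1 ≤ y) (d : ℕ) (hd : Squarefree d)
    (htot : 0 < ∑ n ∈ Finset.Icc 1 ⌊x⌋₊, ‖f n‖ ^ 2)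
    (F : ℝ → ℝ)
    (hF : ∀ t : ℝ, F t = (∑ n ∈ Finset.Icc 1 ⌊x / t⌋₊, ‖f n‖ ^ 2) /
      (∑ n ∈ Finset.Icc 1 ⌊x⌋₊, ‖f n‖ ^ 2)) :
    ∑ n ∈ (Finset.Icc 1 ⌊x / y⌋₊).filter (fun n => d ^ 2 ∣ n), ‖f n‖ ^ 2 ≤
      (∑ a ∈ d.divisors, ((d / a).divisors.card : ℝ)) *
        (∏ p ∈ d.primeFactors, (2 + ‖f (p ^ 2)‖ ^ 2)) *
        F (y * (d : ℝ) ^ 2) * ∑ n ∈ Finset.Icc 1 ⌊x⌋₊, ‖f n‖ ^ 2 :=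
  hecke_sum_div_d2_general f hf x y d hd htot F hF
end

section
/- Let f be a Hecke-multiplicative function and p a prime with |f(p)| ≤ 1/2. Then for every positive integer n with p² ∤ n, |f(n)·f(p²)| ≤ |f(p²n)|. -/
open Finset

/-! If `p² ∣ n` fails, either `p ∤ n` and `f (p² n) = f (p²) f n` by multiplicativity, or
`n = p m` with `p ∤ m`, and the Hecke relation for `gcd (p², p m) = p` gives
`f (p³ m) = f (p m) (f (p)² - 2)` against `f (p²) = f (p)² - 1`. A complex number `w` with
`re w ≤ 3/2` is at least as close to `1` as to `2`, which applies to `w = f (p)²`. -/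

theorem Complex.norm_sub_one_le_norm_sub_two {w : ℂ} (hw : w.re ≤ 3 / 2) :
    ‖w - 1‖ ≤ ‖w - 2‖ := by
  rw [← sq_le_sq₀ (norm_nonneg _) (norm_nonneg _), Complex.sq_norm, Complex.sq_norm,
    Complex.normSq_apply, Complex.normSq_apply]
  simp only [Complex.sub_re, Complex.sub_im, Complex.one_re, Complex.one_im,
    Complex.re_ofNat, Complex.im_ofNat]
  nlinarith

namespace HeckeMult

variable {f : ℕ → ℂ}

theorem map_mul_of_coprime_s14 (hf : HeckeMult f) {m n : ℕ} (hm : 0 < m) (hn : 0 < n)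
    (hmn : m.Coprime n) : f (m * n) = f m * f n := by
  rw [hf.2 m n hm hn, hmn.gcd_eq_one, Nat.divisors_one, sum_singleton, one_pow, Nat.div_one]

theorem mul_eq_of_gcd_eq_prime (hf : HeckeMult f) {p m n : ℕ} (hp : p.Prime) (hm : 0 < m)
    (hn : 0 < n) (hmn : m.gcd n = p) : f m * f n = f (m * n) + f (m * n / p ^ 2) := by
  rw [hf.2 m n hm hn, hmn, hp.divisors, sum_pair hp.one_lt.ne, one_pow, Nat.div_one]

theorem map_prime_sq (hf : HeckeMult f) {p : ℕ} (hp : p.Prime) : f (p ^ 2) = f p ^ 2 - 1 := by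
  have h := hf.mul_eq_of_gcd_eq_prime hp hp.pos hp.pos (Nat.gcd_self p)
  rw [← sq p, Nat.div_self (pow_pos hp.pos 2), hf.1] at h
  linear_combination -h

theorem map_prime_sq_mul_prime_mul (hf : HeckeMult f) {p m : ℕ} (hp : p.Prime) (hm : 0 < m)
    (hpm : ¬ p ∣ m) : f (p ^ 2 * (p * m)) = f (p * m) * (f p ^ 2 - 2) := by
  have hgcd : (p ^ 2).gcd (p * m) = p := by
    rw [sq, Nat.gcd_mul_left, (hp.coprime_iff_not_dvd.mpr hpm).gcd_eq_one, mul_one]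
  have h := hf.mul_eq_of_gcd_eq_prime hp (pow_pos hp.pos 2) (mul_pos hp.pos hm) hgcd
  rw [Nat.mul_div_cancel_left _ (pow_pos hp.pos 2), hf.map_prime_sq hp] at h
  linear_combination -h

end HeckeMult

theorem hecke_small_fp_general (f : ℕ → ℂ) (hf : HeckeMult f) (p : ℕ) (hp : p.Prime)
    (hfp : ‖f p‖ ≤ 1 / 2) (n : ℕ) (hnd : ¬ p ^ 2 ∣ n) :
    ‖f n * f (p ^ 2)‖ ≤ ‖f (p ^ 2 * n)‖ := by
  have hn : 0 < n := Nat.pos_of_ne_zero fun h => hnd (h ▸ dvd_zero _)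
  by_cases hpn : p ∣ n
  · obtain ⟨m, rfl⟩ := hpn
    have hm : 0 < m := Nat.pos_of_mul_pos_left hn
    have hpm : ¬ p ∣ m := fun h => hnd (sq p ▸ Nat.mul_dvd_mul_left p h)
    rw [hf.map_prime_sq_mul_prime_mul hp hm hpm, hf.map_prime_sq hp, norm_mul, norm_mul]
    refine mul_le_mul_of_nonneg_left (Complex.norm_sub_one_le_norm_sub_two ?_) (norm_nonneg _)
    calc (f p ^ 2).re ≤ ‖f p ^ 2‖ := Complex.re_le_norm _
      _ = ‖f p‖ ^ 2 := norm_pow _ 2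
      _ ≤ 3 / 2 := by nlinarith [norm_nonneg (f p)]
  · rw [hf.map_mul_of_coprime_s14 (pow_pos hp.pos 2) hn
      ((hp.coprime_iff_not_dvd.mpr hpn).pow_left 2), mul_comm]

theorem hecke_small_fp (f : ℕ → ℂ) (hf : HeckeMult f) (p : ℕ) (hp : p.Prime)
    (hfp : ‖f p‖ ≤ 1 / 2) (n : ℕ) (hn : 0 < n) (hnd : ¬ p ^ 2 ∣ n) :
    ‖f n * f (p ^ 2)‖ ≤ ‖f (p ^ 2 * n)‖ :=
  hecke_small_fp_general f hf p hp hfp n hnd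
end

section
/- Let f be a Hecke-multiplicative function, x ≥ y ≥ 1 real, P a finite set of primes, and δ > 0 with |f(p)| ≥ δ for all p ∈ P. Let k be an integer with 1 ≤ k ≤ |P|/4 − 1, and let N(k) be the set of positive integers divisible by at most k distinct primes of P. Assume p₁p₂ ≤ y for all p₁,p₂ ∈ P. Then Σ_{n ≤ x/y, n ∈ N(k)} |f(n)|² ≤ (3(k+2)²)/(δ⁴·(|P|−k)(|P|−k−1)/2) · Σ_{n ≤ x} |f(n)|². -/
open Finset

set_option maxHeartbeats 1600000 in
theorem hecke_Njk (f : ℕ → ℂ) (hf : HeckeMult f) (x y : ℝ) (hy : 1 ≤ y) (hxy : y ≤ x)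
    (P : Finset ℕ) (hP : ∀ p ∈ P, p.Prime) (δ : ℝ) (hδ : 0 < δ)
    (hPf : ∀ p ∈ P, δ ≤ ‖f p‖)
    (hPy : ∀ p₁ ∈ P, ∀ p₂ ∈ P, ((p₁ * p₂ : ℕ) : ℝ) ≤ y)
    (k : ℕ) (hk : 1 ≤ k) (hkP : (k : ℝ) ≤ (P.card : ℝ) / 4 - 1) :
    ∑ n ∈ (Finset.Icc 1 ⌊x / y⌋₊).filter
        (fun n => (P.filter (fun p => p ∣ n)).card ≤ k),
      ‖f n‖ ^ 2 ≤
      (3 * ((k : ℝ) + 2) ^ 2) /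
          (δ ^ 4 * (((P.card : ℝ) - k) * ((P.card : ℝ) - k - 1) / 2)) *
        ∑ n ∈ Finset.Icc 1 ⌊x⌋₊, ‖f n‖ ^ 2 := by
  classical
  have hmul : ∀ m n : ℕ, 0 < m → 0 < n → Nat.Coprime m n → f (m * n) = f m * f n := by
    intro m n hm hn hco
    have h := hf.2 m n hm hn
    rw [hco.gcd_eq_one] at h
    simp [Nat.divisors_one] at h
    rw [h]
  have hy0 : (0:ℝ) < y := lt_of_lt_of_le one_pos hy
  -- P.card is large
  have hPck : 4 * k + 4 ≤ P.card := by
    have : (4:ℝ) * k + 4 ≤ (P.card : ℝ) := by linarith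
    exact_mod_cast this
  set A : Finset ℕ := (Finset.Icc 1 ⌊x / y⌋₊).filter
      (fun n => (P.filter (fun p => p ∣ n)).card ≤ k) with hA
  set g : ℕ → ℝ := fun m => ‖f m‖ ^ 2 with hg
  have hg0 : ∀ m, 0 ≤ g m := fun m => sq_nonneg _
  set π : ℕ × ℕ × ℕ → ℕ := fun t => t.1 * (t.2.1 * t.2.2) with hπ
  set S : Finset (ℕ × ℕ × ℕ) := (A ×ˢ P ×ˢ P).filter
      (fun t => ¬ t.2.1 ∣ t.1 ∧ ¬ t.2.2 ∣ t.1 ∧ t.2.1 ≠ t.2.2) with hS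
  set L : ℝ := ∑ n ∈ A, g n with hL
  set R : ℝ := ∑ n ∈ Finset.Icc 1 ⌊x⌋₊, g n with hR
  set C1 : ℝ := ((P.card : ℝ) - k) * ((P.card : ℝ) - k - 1) with hC1
  have hC1pos : 0 < C1 := by
    have h1 : (4:ℝ) * k + 4 ≤ (P.card : ℝ) := by linarith
    have hk1 : (1:ℝ) ≤ (k:ℝ) := by exact_mod_cast hk
    apply mul_pos <;> linarith
  -- rewrite S-sum as nested sum
  have hnested : ∑ t ∈ S, g (π t) =
      ∑ n ∈ A, ∑ q ∈ (P.filter (fun p => ¬ p ∣ n)).offDiag, g (n * (q.1 * q.2)) := by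
    rw [hS, Finset.sum_filter, Finset.sum_product]
    refine Finset.sum_congr rfl (fun n hn => ?_)
    rw [← Finset.sum_filter]
    refine Finset.sum_congr ?_ (fun q _ => rfl)
    ext q
    simp only [Finset.mem_filter, Finset.mem_product, Finset.mem_offDiag]
    tauto
  -- lower bound
  have hlow : δ ^ 4 * C1 * L ≤ ∑ t ∈ S, g (π t) := by
    rw [hnested, hL, Finset.mul_sum]
    apply Finset.sum_le_sum
    intro n hn
    have hnA := hn
    rw [hA, Finset.mem_filter, Finset.mem_Icc] at hnA
    obtain ⟨⟨hn1, hn2⟩, hnk⟩ := hnA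
    set Pn : Finset ℕ := P.filter (fun p => ¬ p ∣ n) with hPn
    have hcards : P.card - k ≤ Pn.card := by
      have hsplit : (P.filter (fun p => p ∣ n)).card + Pn.card = P.card := by
        rw [hPn]
        simpa using Finset.card_filter_add_card_filter_not
          (s := P) (p := fun p => p ∣ n)
      omega
    -- pointwise bound on pairs
    have hpt : ∀ q ∈ Pn.offDiag, δ ^ 4 * g n ≤ g (n * (q.1 * q.2)) := by
      intro q hq
      rw [Finset.mem_offDiag] at hq
      obtain ⟨hq1, hq2, hqne⟩ := hq
      rw [hPn, Finset.mem_filter] at hq1 hq2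
      obtain ⟨hp1P, hp1d⟩ := hq1
      obtain ⟨hp2P, hp2d⟩ := hq2
      have hp1 := hP _ hp1P
      have hp2 := hP _ hp2P
      have hco1 : Nat.Coprime n q.1 := ((hp1.coprime_iff_not_dvd).mpr hp1d).symm
      have hco2 : Nat.Coprime n q.2 := ((hp2.coprime_iff_not_dvd).mpr hp2d).symm
      have hcopp : Nat.Coprime q.1 q.2 := (Nat.coprime_primes hp1 hp2).mpr hqne
      have hfeq : f (n * (q.1 * q.2)) = f n * (f q.1 * f q.2) := by
        rw [hmul n (q.1 * q.2) hn1 (Nat.mul_pos hp1.pos hp2.pos) (hco1.mul_right hco2),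
          hmul q.1 q.2 hp1.pos hp2.pos hcopp]
      have hb1 : δ ≤ ‖f q.1‖ := hPf _ hp1P
      have hb2 : δ ≤ ‖f q.2‖ := hPf _ hp2P
      have hb1' : δ ^ 2 ≤ ‖f q.1‖ ^ 2 := by nlinarith
      have hb2' : δ ^ 2 ≤ ‖f q.2‖ ^ 2 := by nlinarith
      have ha : (0:ℝ) ≤ ‖f n‖ := norm_nonneg _
      simp only [hg, hfeq, norm_mul]
      nlinarith [sq_nonneg (‖f n‖), sq_nonneg δ,
        mul_le_mul hb1' hb2' (by positivity) (sq_nonneg _),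
        mul_le_mul_of_nonneg_left
          (mul_le_mul hb1' hb2' (by positivity) (sq_nonneg _))
          (sq_nonneg (‖f n‖))]
    have hsum := Finset.card_nsmul_le_sum Pn.offDiag _ _ hpt
    rw [nsmul_eq_mul] at hsum
    refine le_trans ?_ hsum
    have hcard2 : C1 ≤ (Pn.offDiag.card : ℝ) := by
      rw [Finset.offDiag_card]
      have hc1 : Pn.card ≤ Pn.card * Pn.card := Nat.le_mul_of_pos_left _ (by omega)
      have : ((Pn.card * Pn.card - Pn.card : ℕ) : ℝ)
          = (Pn.card : ℝ) * Pn.card - Pn.card := by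
        push_cast [Nat.cast_sub hc1]; ring
      rw [this]
      have hcc : ((P.card : ℝ) - k) ≤ (Pn.card : ℝ) := by
        have : ((P.card - k : ℕ) : ℝ) ≤ (Pn.card : ℝ) := by exact_mod_cast hcards
        rw [Nat.cast_sub (by omega)] at this
        exact this
      have hpk : (4:ℝ) * k + 4 ≤ (P.card : ℝ) := by exact_mod_cast hPck
      have hk1 : (1:ℝ) ≤ (k:ℝ) := by exact_mod_cast hk
      rw [hC1]
      nlinarith
    have := mul_le_mul_of_nonneg_right hcard2 (mul_nonneg (by positivity) (hg0 n) : (0:ℝ) ≤ δ ^ 4 * g n)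
    calc δ ^ 4 * C1 * g n = C1 * (δ ^ 4 * g n) := by ring
      _ ≤ (Pn.offDiag.card : ℝ) * (δ ^ 4 * g n) := this
  -- maps into Icc 1 ⌊x⌋₊
  have hmaps : ∀ t ∈ S, π t ∈ Finset.Icc 1 ⌊x⌋₊ := by
    intro t ht
    rw [hS, Finset.mem_filter, Finset.mem_product, Finset.mem_product] at ht
    obtain ⟨⟨htA, hp1P, hp2P⟩, -⟩ := ht
    rw [hA, Finset.mem_filter, Finset.mem_Icc] at htA
    obtain ⟨⟨h1, h2⟩, -⟩ := htA
    have hp1 := hP _ hp1P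
    have hp2 := hP _ hp2P
    rw [Finset.mem_Icc]
    constructor
    · have h0 : 0 < t.1 * (t.2.1 * t.2.2) :=
        Nat.mul_pos (by omega) (Nat.mul_pos hp1.pos hp2.pos)
      exact h0
    · apply Nat.le_floor
      have hray : ((t.2.1 * t.2.2 : ℕ) : ℝ) ≤ y := hPy _ hp1P _ hp2P
      have hxy0 : (0:ℝ) ≤ x / y := div_nonneg (by linarith) (by linarith)
      have ht1 : (t.1 : ℝ) ≤ x / y :=
        le_trans (Nat.cast_le.mpr h2) (Nat.floor_le hxy0)
      have : (π t : ℝ) = (t.1 : ℝ) * ((t.2.1 * t.2.2 : ℕ) : ℝ) := by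
        rw [hπ]; push_cast; ring
      rw [this]
      calc (t.1 : ℝ) * ((t.2.1 * t.2.2 : ℕ) : ℝ) ≤ (x / y) * y :=
            mul_le_mul ht1 hray (by positivity) hxy0
        _ = x := div_mul_cancel₀ x (ne_of_gt hy0)
  -- fiber bound
  have hfiber : ∀ m, (S.filter (fun t => π t = m)).card ≤ (k + 2) ^ 2 := by
    intro m
    rcases Finset.eq_empty_or_nonempty (S.filter (fun t => π t = m)) with he | ⟨t₀, ht₀⟩
    · simp [he]
    rw [Finset.mem_filter] at ht₀
    obtain ⟨ht₀S, ht₀m⟩ := ht₀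
    rw [hS, Finset.mem_filter, Finset.mem_product, Finset.mem_product] at ht₀S
    obtain ⟨⟨ht₀A, hq1P, hq2P⟩, -⟩ := ht₀S
    rw [hA, Finset.mem_filter] at ht₀A
    set Q : Finset ℕ := P.filter (fun p => p ∣ m) with hQ
    have hQcard : Q.card ≤ k + 2 := by
      have hsub : Q ⊆ (P.filter (fun p => p ∣ t₀.1)) ∪ {t₀.2.1, t₀.2.2} := by
        intro p hp
        rw [hQ, Finset.mem_filter] at hp
        obtain ⟨hpP, hpd⟩ := hp
        have hp' := hP _ hpP
        rw [← ht₀m, hπ] at hpd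
        simp only [Finset.mem_union, Finset.mem_filter, Finset.mem_insert,
          Finset.mem_singleton]
        have hpd' : p ∣ t₀.1 * (t₀.2.1 * t₀.2.2) := hpd
        rcases (Nat.Prime.dvd_mul hp').mp hpd' with h | h
        · exact Or.inl ⟨hpP, h⟩
        · rcases (Nat.Prime.dvd_mul hp').mp h with h' | h'
          · exact Or.inr (Or.inl ((Nat.prime_dvd_prime_iff_eq hp' (hP _ hq1P)).mp h'))
          · exact Or.inr (Or.inr ((Nat.prime_dvd_prime_iff_eq hp' (hP _ hq2P)).mp h'))
      calc Q.card ≤ _ := Finset.card_le_card hsub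
        _ ≤ (P.filter (fun p => p ∣ t₀.1)).card + ({t₀.2.1, t₀.2.2} : Finset ℕ).card :=
            Finset.card_union_le _ _
        _ ≤ k + 2 := by
            have h2 : ({t₀.2.1, t₀.2.2} : Finset ℕ).card ≤ 2 :=
              le_trans (Finset.card_insert_le _ _) (by simp)
            exact add_le_add ht₀A.2 h2
    have hinj : (S.filter (fun t => π t = m)).card ≤ (Q ×ˢ Q).card := by
      apply Finset.card_le_card_of_injOn (fun t => t.2)
      · intro t ht
        rw [Finset.mem_coe, Finset.mem_filter] at ht
        obtain ⟨htS, htm⟩ := ht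
        rw [hS, Finset.mem_filter, Finset.mem_product, Finset.mem_product] at htS
        obtain ⟨⟨-, h1, h2⟩, -⟩ := htS
        rw [Finset.mem_coe, Finset.mem_product]
        constructor
        · rw [hQ, Finset.mem_filter]
          exact ⟨h1, ⟨t.1 * t.2.2, by rw [← htm, hπ]; ring⟩⟩
        · rw [hQ, Finset.mem_filter]
          exact ⟨h2, ⟨t.1 * t.2.1, by rw [← htm, hπ]; ring⟩⟩
      · intro t ht t' ht' heq
        simp only [Finset.coe_filter, Set.mem_setOf_eq] at ht ht'
        have hc0 : 0 < t.2.1 * t.2.2 := by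
          rw [hS, Finset.mem_filter, Finset.mem_product, Finset.mem_product] at ht
          exact Nat.mul_pos (hP _ ht.1.1.2.1).pos (hP _ ht.1.1.2.2).pos
        have heq' : t.2 = t'.2 := heq
        have e1 : t.1 * (t.2.1 * t.2.2) = m := ht.2
        have e2 : t'.1 * (t'.2.1 * t'.2.2) = m := ht'.2
        have h1 : t.1 * (t.2.1 * t.2.2) = t'.1 * (t.2.1 * t.2.2) := by
          rw [e1, heq', ← e2]
        have := Nat.eq_of_mul_eq_mul_right hc0 h1
        exact Prod.ext this heq'
    rw [Finset.card_product] at hinj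
    calc (S.filter (fun t => π t = m)).card ≤ Q.card * Q.card := hinj
      _ ≤ (k + 2) * (k + 2) := Nat.mul_le_mul hQcard hQcard
      _ = (k + 2) ^ 2 := (sq _).symm
  -- upper bound
  have hup : ∑ t ∈ S, g (π t) ≤ ((k : ℝ) + 2) ^ 2 * R := by
    rw [← Finset.sum_fiberwise_of_maps_to hmaps (fun t => g (π t)), hR, Finset.mul_sum]
    apply Finset.sum_le_sum
    intro m hm
    have hconst : ∑ t ∈ S.filter (fun t => π t = m), g (π t)
        = ((S.filter (fun t => π t = m)).card : ℝ) * g m := by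
      rw [Finset.sum_congr rfl (fun t ht => by rw [(Finset.mem_filter.mp ht).2]),
        Finset.sum_const, nsmul_eq_mul]
    rw [hconst]
    apply mul_le_mul_of_nonneg_right _ (hg0 m)
    have hcst := (Nat.cast_le (α := ℝ)).mpr (hfiber m)
    push_cast at hcst
    exact hcst
  -- combine
  have hmain : δ ^ 4 * C1 * L ≤ ((k : ℝ) + 2) ^ 2 * R := le_trans hlow hup
  have hR0 : 0 ≤ R := Finset.sum_nonneg (fun m _ => hg0 m)
  have hL0 : 0 ≤ L := Finset.sum_nonneg (fun m _ => hg0 m)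
  have hD : (0:ℝ) < δ ^ 4 * (C1 / 2) := by positivity
  rw [div_mul_eq_mul_div, le_div_iff₀ hD]
  nlinarith [sq_nonneg ((k:ℝ) + 2), mul_nonneg (sq_nonneg ((k:ℝ)+2)) hR0]
end
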